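/- arXiv:1504.03297 — 4 statements merged into one kernel-verified Lean document; each statement's English description precedes it below -/
import Mathlib

section
/- If Q is a polynomial of degree n such that x Q''(x) + (1+α−x) Q'(x) = −n P(x) for a polynomial P, then ∫₀^∞ P(x) x^α e^{−x} dx = 0. -/
open Polynomial Real MeasureTheory Filter Topology Set

/-! Writing `R = Q'`, the hypothesis says `-n P = x R' + (1 + α - x) R`, and
`x^α e^{-x} (x R' + (1 + α - x) R)` is the derivative of `x^{α+1} e^{-x} R(x)`.
For `α > -1` this primitive vanishes at `0` and at `∞`, so the integral is zero. -/

lemma integrableOn_eval_mul_rpow_mul_exp_neg {α : ℝ} (hα : -1 < α) (p : ℝ[X]) :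
    IntegrableOn (fun x ↦ p.eval x * x ^ α * exp (-x)) (Ioi 0) := by
  induction p using Polynomial.induction_on' with
  | add p q hp hq =>
    exact (hp.add hq).congr_fun (fun x _ ↦ by simp [add_mul]) measurableSet_Ioi
  | monomial k c =>
    have hk : (0 : ℝ) < k + α + 1 := by linarith [(k.cast_nonneg : (0 : ℝ) ≤ k)]
    refine IntegrableOn.congr_fun ((GammaIntegral_convergent hk).smul c) (fun x (hx : 0 < x) ↦ ?_)
      measurableSet_Ioi
    simp only [Pi.smul_apply, smul_eq_mul, eval_monomial]
    rw [add_sub_cancel_right, rpow_add hx, rpow_natCast]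
    ring

lemma tendsto_eval_mul_rpow_mul_exp_neg_atTop (s : ℝ) (p : ℝ[X]) :
    Tendsto (fun x ↦ p.eval x * x ^ s * exp (-x)) atTop (𝓝 0) := by
  induction p using Polynomial.induction_on' with
  | add p q hp hq => simpa [add_mul] using hp.add hq
  | monomial k c =>
    have h := (tendsto_rpow_mul_exp_neg_mul_atTop_nhds_zero (k + s) 1 one_pos).const_mul c
    rw [mul_zero] at h
    refine h.congr' (eventually_gt_atTop 0 |>.mono fun x (hx : 0 < x) ↦ ?_)
    simp only [eval_monomial, rpow_add hx, rpow_natCast, neg_one_mul]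
    ring

lemma hasDerivAt_rpow_mul_exp_neg_mul_eval (α : ℝ) (R : ℝ[X]) {x : ℝ} (hx : 0 < x) :
    HasDerivAt (fun x ↦ x ^ (α + 1) * exp (-x) * R.eval x)
      ((X * derivative R + (C (1 + α) - X) * R).eval x * x ^ α * exp (-x)) x := by
  have h := ((hasDerivAt_rpow_const (p := α + 1) (Or.inl hx.ne')).mul
    (hasDerivAt_neg x).exp).mul (R.hasDerivAt x)
  refine h.congr_deriv ?_
  simp only [Pi.mul_apply, add_sub_cancel_right, rpow_add hx, rpow_one, eval_add, eval_mul,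
    eval_sub, eval_X, eval_C]
  ring

theorem integral_eval_X_mul_derivative_add_mul_rpow_mul_exp_neg {α : ℝ} (hα : -1 < α)
    (R : ℝ[X]) :
    ∫ x in Ioi (0 : ℝ), (X * derivative R + (C (1 + α) - X) * R).eval x * x ^ α * exp (-x)
      = 0 := by
  have hα1 : 0 < α + 1 := by linarith
  have hcont : ContinuousWithinAt (fun x ↦ x ^ (α + 1) * exp (-x) * R.eval x) (Ici 0) 0 :=
    (((continuousAt_rpow_const 0 _ (Or.inr hα1.le)).mul
      (continuous_exp.comp continuous_neg).continuousAt).mul R.continuousAt).continuousWithinAt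
  have htop : Tendsto (fun x ↦ x ^ (α + 1) * exp (-x) * R.eval x) atTop (𝓝 0) :=
    (tendsto_eval_mul_rpow_mul_exp_neg_atTop (α + 1) R).congr fun x ↦ by ring
  rw [integral_Ioi_of_hasDerivAt_of_tendsto hcont
    (fun x hx ↦ hasDerivAt_rpow_mul_exp_neg_mul_eval α R hx)
    (integrableOn_eval_mul_rpow_mul_exp_neg hα _) htop]
  simp [zero_rpow hα1.ne']

theorem laguerre_orthogonality_necessary_general (α : ℝ) (hα : -1 < α) (n : ℕ) (hn : 1 ≤ n)
    (P Q : Polynomial ℝ)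
    (hode : X * derivative (derivative Q) + (C (1 + α) - X) * derivative Q
        = (-(n : ℝ)) • P) :
    ∫ x in Set.Ioi (0 : ℝ), P.eval x * x ^ α * Real.exp (-x) = 0 := by
  have h := integral_eval_X_mul_derivative_add_mul_rpow_mul_exp_neg hα (derivative Q)
  simp only [hode, eval_smul, smul_eq_mul, mul_assoc, integral_const_mul] at h
  have hn0 : (n : ℝ) ≠ 0 := Nat.cast_ne_zero.mpr (by omega)
  simpa [hn0, mul_assoc] using h

/-- if `Q` is a polynomial of degree `n` with
`x Q'' + (1+α−x) Q' = −n P`, then `∫₀^∞ P(x) x^α e^{−x} dx = 0`. -/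
theorem laguerre_orthogonality_necessary (α : ℝ) (hα : -1 < α) (n : ℕ) (hn : 1 ≤ n)
    (P Q : Polynomial ℝ) (hQdeg : Q.natDegree = n)
    (hode : X * derivative (derivative Q) + (C (1 + α) - X) * derivative Q
        = (-(n : ℝ)) • P) :
    ∫ x in Set.Ioi (0 : ℝ), P.eval x * x ^ α * Real.exp (-x) = 0 :=
  laguerre_orthogonality_necessary_general α hα n hn P Q hode
end

section
/- Let w be the Laguerre or Hermite weight, μ a finite positive measure with dμ = r dw, and suppose that for every n > m the monic orthogonal polynomial P_n with respect to μ satisfies ∫ P_n dw = 0 while ∫ P_m dw ≠ 0. If 1/r is a polynomial, then 1/r has degree exactly m. -/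
open Polynomial MeasureTheory

/-- let `w` be the (Laguerre or Hermite) weight measure, `μ` a finite
positive measure with `dμ = r dw`, and suppose that for every `n > m` the monic
orthogonal polynomial `P_n` with respect to `μ` satisfies `∫ P_n dw = 0` while
`∫ P_m dw ≠ 0`.  If `1/r` is a polynomial `ρ`, then `ρ` has degree exactly `m`. -/
theorem inv_density_degree_eq
    (w μ : Measure ℝ) (r : ℝ → ℝ) (ρ : Polynomial ℝ)
    (hρr : ∀ x, r x * ρ.eval x = 1)
    (hrel : ∀ f : ℝ → ℝ, ∫ x, f x ∂μ = ∫ x, f x * r x ∂w)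
    (hintμ : ∀ p : Polynomial ℝ, Integrable (fun x => p.eval x) μ)
    (hintw : ∀ p : Polynomial ℝ, Integrable (fun x => p.eval x) w)
    (P : ℕ → Polynomial ℝ)
    (hPmonic : ∀ k, (P k).Monic) (hPdeg : ∀ k, (P k).natDegree = k)
    (horth : ∀ k j, j < k → ∫ x, (P k).eval x * x ^ j ∂μ = 0)
    (hpos : ∀ k, 0 < ∫ x, ((P k).eval x) ^ 2 ∂μ)
    (m : ℕ)
    (h0 : ∀ n, m < n → ∫ x, (P n).eval x ∂w = 0)
    (hm : ∫ x, (P m).eval x ∂w ≠ 0) :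
    ρ.natDegree = m := by
  -- orthogonality against arbitrary polynomials of lower degree
  have key : ∀ n (q : Polynomial ℝ), q.natDegree < n →
      ∫ x, (P n).eval x * q.eval x ∂μ = 0 := by
    intro n q hq
    have heq : (fun x => (P n).eval x * q.eval x)
        = fun x => ∑ i ∈ Finset.range n, q.coeff i * ((P n * X ^ i).eval x) := by
      funext x
      rw [Polynomial.eval_eq_sum_range' hq, Finset.mul_sum]
      refine Finset.sum_congr rfl fun i _ => ?_
      simp [eval_mul, eval_pow]; ring
    rw [heq, integral_finset_sum _ (fun i _ => (hintμ (P n * X ^ i)).const_mul _)]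
    refine Finset.sum_eq_zero fun i hi => ?_
    rw [MeasureTheory.integral_const_mul]
    have := horth n i (Finset.mem_range.mp hi)
    simp only [eval_mul, eval_pow, eval_X]
    rw [this, mul_zero]
  -- ∫ Pₙ dw = ∫ Pₙ ρ dμ
  have keyw : ∀ n, ∫ x, (P n).eval x ∂w = ∫ x, (P n).eval x * ρ.eval x ∂μ := by
    intro n
    have h1 : ∀ x, ((P n).eval x * ρ.eval x) * r x = (P n).eval x := by
      intro x
      rw [mul_assoc, mul_comm (ρ.eval x), hρr, mul_one]
    calc ∫ x, (P n).eval x ∂w = ∫ x, ((P n).eval x * ρ.eval x) * r x ∂w := by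
          simp only [h1]
      _ = ∫ x, (P n).eval x * ρ.eval x ∂μ := (hrel _).symm
  have hρ0 : ρ ≠ 0 := by
    intro h
    have := hρr 0
    simp [h] at this
  have hlc : ρ.leadingCoeff ≠ 0 := leadingCoeff_ne_zero.mpr hρ0
  set d := ρ.natDegree with hd
  rcases lt_trichotomy d m with hlt | heq | hgt
  · exact absurd (by rw [keyw m]; exact key m ρ hlt) hm
  · exact heq
  · exfalso
    -- write ρ = C lc * P d + q with deg q < d
    set q : Polynomial ℝ := ρ - C ρ.leadingCoeff * (P d) with hqdef
    have hPd0 : (P d) ≠ 0 := (hPmonic d).ne_zero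
    have hdegPd : (P d).degree = (d : WithBot ℕ) := by
      rw [degree_eq_natDegree hPd0, hPdeg d]
    have hdegρ : ρ.degree = (d : WithBot ℕ) := degree_eq_natDegree hρ0
    have hq0 : ∫ x, (P d).eval x * q.eval x ∂μ = 0 := by
      rcases eq_or_ne q 0 with h | h
      · simp [h]
      · apply key
        have hdlt : q.degree < (d : WithBot ℕ) := by
          rw [hqdef, ← hdegρ]
          apply degree_sub_lt _ hρ0
          · simp [leadingCoeff_mul, (hPmonic d).leadingCoeff]
          · rw [hdegρ, degree_C_mul hlc, hdegPd]
        exact (natDegree_lt_iff_degree_lt h).mpr hdlt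
    have hsplit : ∫ x, (P d).eval x * ρ.eval x ∂μ
        = ρ.leadingCoeff * (∫ x, ((P d).eval x) ^ 2 ∂μ)
          + ∫ x, (P d).eval x * q.eval x ∂μ := by
      have hfun : (fun x => (P d).eval x * ρ.eval x)
          = fun x => ρ.leadingCoeff * ((P d).eval x) ^ 2
              + (P d).eval x * q.eval x := by
        funext x
        have : ρ.eval x = ρ.leadingCoeff * (P d).eval x + q.eval x := by
          simp only [hqdef, eval_sub, eval_mul, eval_C]; ring
        rw [this]; ring
      rw [hfun]
      have hint1 : Integrable (fun x => ρ.leadingCoeff * ((P d).eval x) ^ 2) μ := by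
        have := (hintμ ((P d) * (P d))).const_mul ρ.leadingCoeff
        simpa [eval_mul, sq] using this
      have hint2 : Integrable (fun x => (P d).eval x * q.eval x) μ := by
        have := hintμ ((P d) * q)
        simpa [eval_mul] using this
      rw [integral_add hint1 hint2, MeasureTheory.integral_const_mul]
    have hzero := h0 d hgt
    rw [keyw d, hsplit, hq0, add_zero] at hzero
    exact hlc (by
      have := hpos d
      rcases mul_eq_zero.mp hzero with h | h
      · exact h
      · exact absurd h (ne_of_gt this))
end

section
/- Let α > −1, and let Q be a polynomial of degree n with real coefficients whose zeros are real and simple, at least n−1 of them lying in (0,∞). Suppose x Q''(x) + (1+α−x) Q'(x) = −n P(x) where P is a polynomial of degree n all of whose zeros lie in (0,∞). Then all n−1 critical points of Q lie in (0,∞). -/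
/-!
Since `Q` has `n` real zeros, Rolle's theorem makes `Q'` split over `ℝ`, and it puts at least
`n - 2` critical points between the positive zeros of `Q`; so at most one critical point can be
nonpositive. Evaluating the differential equation at `0` and comparing leading coefficients
(`lc P = lc Q`) turns `(1 + α) Q'(0) = -n P(0)` into `(1 + α) ∏ c = ∏ p` over the critical points
`c` of `Q` and the zeros `p` of `P`. The right side is positive, so the left product is too, which
rules out a single nonpositive factor.
-/

open Polynomial

namespace Multiset

theorem forall_pos_of_prod_pos_of_card_le {R : Type*} [CommRing R] [LinearOrder R]
    [IsStrictOrderedRing R] {s : Multiset R} (hprod : 0 < s.prod)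
    (hcard : card s ≤ card (s.filter (0 < ·)) + 1) : ∀ x ∈ s, 0 < x := by
  by_contra! ⟨x, hx, hx0⟩
  obtain ⟨t, rfl⟩ := exists_cons_of_mem hx
  have ht : ∀ y ∈ t, 0 < y := by
    rw [← filter_eq_self]
    refine eq_of_le_of_card_le (filter_le _ t) ?_
    simpa [filter_cons_of_neg _ hx0.not_gt] using hcard
  rw [prod_cons] at hprod
  exact hprod.not_ge (mul_nonpos_of_nonpos_of_nonneg hx0 (prod_pos ht).le)

end Multiset

namespace Polynomial

theorem card_roots_toFinset_filter_le_derivative (p : ℝ[X]) (s : Set ℝ) [s.OrdConnected]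
    [DecidablePred (· ∈ s)] :
    (p.roots.toFinset.filter (· ∈ s)).card
      ≤ (p.derivative.roots.toFinset.filter (· ∈ s)).card + 1 := by
  rcases eq_or_ne (derivative p) 0 with hp' | hp'
  · rw [eq_C_of_derivative_eq_zero hp']
    simp
  refine (Finset.card_le_sdiff_of_interleaved fun x hx y hy hxy _ => ?_).trans
    (by grw [Finset.sdiff_subset])
  simp only [Finset.mem_filter, Multiset.mem_toFinset] at hx hy
  obtain ⟨z, hz, hz'⟩ := exists_deriv_eq_zero hxy p.continuousOn
    ((isRoot_of_mem_roots hx.1).trans (isRoot_of_mem_roots hy.1).symm)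
  refine ⟨z, ?_, hz⟩
  rw [Finset.mem_filter, Multiset.mem_toFinset, mem_roots hp', IsRoot, ← p.deriv]
  exact ⟨hz', Set.Icc_subset s hx.2 hy.2 (Set.Ioo_subset_Icc_self hz)⟩

theorem Splits.derivative_of_real {p : ℝ[X]} (hp : p.Splits) : p.derivative.Splits := by
  rw [splits_iff_card_roots] at hp
  rw [splits_iff_card_roots, natDegree_derivative]
  have hrolle := p.card_roots_le_derivative
  have hdeg : p.derivative.roots.card ≤ p.natDegree - 1 :=
    p.derivative.card_roots'.trans_eq p.natDegree_derivative
  omega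

variable {R : Type*} [CommRing R]

noncomputable def laguerreOperator (α : R) (Q : R[X]) : R[X] :=
  X * derivative (derivative Q) + (C (1 + α) - X) * derivative Q

theorem eval_zero_laguerreOperator (α : R) (Q : R[X]) :
    (laguerreOperator α Q).eval 0 = (1 + α) * (derivative Q).eval 0 := by
  simp [laguerreOperator]

theorem coeff_laguerreOperator_natDegree (α : R) (Q : R[X]) :
    (laguerreOperator α Q).coeff Q.natDegree = -(Q.natDegree * Q.leadingCoeff) := by
  rcases eq_or_ne Q.natDegree 0 with h | h
  · rw [h, eq_C_of_natDegree_eq_zero h]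
    simp [laguerreOperator]
  obtain ⟨m, hm⟩ := Nat.exists_eq_add_one_of_ne_zero h
  have hQ' : (derivative Q).coeff (m + 1) = 0 :=
    coeff_eq_zero_of_natDegree_lt ((natDegree_derivative_le Q).trans_lt (by omega))
  have hQ'' : (derivative (derivative Q)).coeff m = 0 := by
    rw [coeff_derivative, hQ', zero_mul]
  have hlc : (derivative Q).coeff m = Q.leadingCoeff * (m + 1) := by
    rw [coeff_derivative, ← hm, coeff_natDegree]
  simp only [laguerreOperator, hm, sub_mul, coeff_add, coeff_sub, coeff_X_mul, coeff_C_mul,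
    hQ'', hQ', hlc]
  push_cast
  ring

theorem prod_roots_derivative_of_laguerreOperator_eq {K : Type*} [Field K] [CharZero K]
    {α : K} {Q P : K[X]}
    (hQ' : (derivative Q).Splits) (hP : P.Splits) (hdeg : P.natDegree = Q.natDegree)
    (hQ0 : Q.natDegree ≠ 0)
    (hode : laguerreOperator α Q = -(Q.natDegree : K) • P) :
    (1 + α) * (derivative Q).roots.prod = P.roots.prod := by
  obtain ⟨m, hm⟩ := Nat.exists_eq_add_one_of_ne_zero hQ0
  have hlc : P.leadingCoeff = Q.leadingCoeff := by
    have h := congrArg (coeff · Q.natDegree) hode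
    rw [coeff_laguerreOperator_natDegree, coeff_smul, smul_eq_mul, ← hdeg, coeff_natDegree,
      hdeg] at h
    have hn : (Q.natDegree : K) ≠ 0 := Nat.cast_ne_zero.2 hQ0
    exact mul_left_cancel₀ (neg_ne_zero.2 hn) (by linear_combination -h)
  have h0 := congrArg (eval 0) hode
  rw [eval_zero_laguerreOperator, eval_smul, smul_eq_mul, ← coeff_zero_eq_eval_zero,
    ← coeff_zero_eq_eval_zero, hQ'.coeff_zero_eq_leadingCoeff_mul_prod_roots,
    hP.coeff_zero_eq_leadingCoeff_mul_prod_roots, hlc, hdeg, leadingCoeff_derivative,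
    natDegree_derivative, hm] at h0
  have hne : ((-1) ^ m * (Q.leadingCoeff * (m + 1 : ℕ)) : K) ≠ 0 :=
    mul_ne_zero (pow_ne_zero _ (by norm_num)) (mul_ne_zero
      (leadingCoeff_ne_zero.2 (ne_zero_of_natDegree_gt (Nat.pos_of_ne_zero hQ0)))
      (Nat.cast_ne_zero.2 m.succ_ne_zero))
  refine mul_left_cancel₀ hne ?_
  rw [Nat.add_sub_cancel, pow_succ] at h0
  linear_combination h0

end Polynomial

theorem critical_points_positive_general (α : ℝ) (hα : -1 < α) (n : ℕ)
    (Q P : Polynomial ℝ) (hQdeg : Q.natDegree = n)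
    (hQroots : Q.roots.card = n)
    (hQpos : n - 1 ≤ (Q.roots.toFinset.filter (fun x => 0 < x)).card)
    (hPdeg : P.natDegree = n) (hProots : P.roots.card = n)
    (hPpos : ∀ x ∈ P.roots, 0 < x)
    (hode : X * derivative (derivative Q) + (C (1 + α) - X) * derivative Q
        = (-(n : ℝ)) • P) :
    (derivative Q).roots.card = n - 1 ∧ ∀ x ∈ (derivative Q).roots, 0 < x := by
  obtain rfl | hn := eq_or_ne n 0
  · simp [derivative_eq_zero.2 hQdeg]
  have hQ' : (derivative Q).Splits :=
    (splits_iff_card_roots.2 (hQroots.trans hQdeg.symm)).derivative_of_real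
  have hcard : (derivative Q).roots.card = n - 1 := by
    rw [← hQ'.natDegree_eq_card_roots, natDegree_derivative, hQdeg]
  refine ⟨hcard, Multiset.forall_pos_of_prod_pos_of_card_le ?_ ?_⟩
  · have hprod : (1 + α) * (derivative Q).roots.prod = P.roots.prod := by
      subst hQdeg
      exact prod_roots_derivative_of_laguerreOperator_eq hQ'
        (splits_iff_card_roots.2 (hProots.trans hPdeg.symm)) hPdeg hn hode
    exact pos_of_mul_pos_right (hprod ▸ Multiset.prod_pos hPpos) (by linarith)
  · have hrolle := Q.card_roots_toFinset_filter_le_derivative (Set.Ioi 0)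
    have hfinset := (derivative Q).roots.filter (0 < ·) |>.toFinset_card_le
    simp only [Set.mem_Ioi, Multiset.toFinset_filter] at hrolle hfinset
    omega

/-- let `α > −1` and `Q` a real polynomial of degree `n` with real simple
zeros, at least `n−1` of them in `(0,∞)`.  If `x Q'' + (1+α−x) Q' = −n P` with `P` of
degree `n` having all its zeros in `(0,∞)`, then all `n−1` critical points of `Q` lie
in `(0,∞)`. -/
theorem critical_points_positive (α : ℝ) (hα : -1 < α) (n : ℕ) (hn : 1 ≤ n)
    (Q P : Polynomial ℝ) (hQdeg : Q.natDegree = n)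
    (hQroots : Q.roots.card = n) (hQsimple : Q.roots.Nodup)
    (hQpos : n - 1 ≤ (Q.roots.toFinset.filter (fun x => 0 < x)).card)
    (hPdeg : P.natDegree = n) (hProots : P.roots.card = n)
    (hPpos : ∀ x ∈ P.roots, 0 < x)
    (hode : X * derivative (derivative Q) + (C (1 + α) - X) * derivative Q
        = (-(n : ℝ)) • P) :
    (derivative Q).roots.card = n - 1 ∧ ∀ x ∈ (derivative Q).roots, 0 < x :=
  critical_points_positive_general α hα n Q P hQdeg hQroots hQpos hPdeg hProots hPpos hode
end

section
/- The monic Hermite polynomials satisfy, for every j ≥ 0 and n ≥ 0, z^j H_n(z) = Σ_{ν=0}^{j} σ_{j,ν}(n) H_{n+j−2ν}(z), where each σ_{j,ν}(n) is a polynomial in n of degree ν with leading coefficient 2^{−ν} · binom(j,ν) (with the convention H_k = 0 for k < 0). -/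
/-!
Multiplying `H_k` by `z` gives `H_{k+1} + (k/2) H_{k-1}`, so multiplying the expansion of
`z^j H_n` by `z` yields Pascal-type recursions for the coefficients,
`σ_{j+1,ν+1}(n) = σ_{j,ν+1}(n) + σ_{j,ν}(n) (n + j - 2ν)/2`, from which degree `ν` and leading
coefficient `C(j,ν)/2^ν` follow by induction on `j`. The three-term recurrence fails only at
`k = -1` (`z H_{-1} = 0 ≠ H_0`), and the coefficient in front of `H_{-1}` is zero: `σ_{j,ν}(n)`
vanishes whenever `n + j < 2ν`.
-/

open Polynomial Finset

/-- The monic Hermite polynomials (weight `e^{-x²}`), via the recurrence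
`H_{n+1} = x H_n - (n/2) H_{n-1}`. -/
noncomputable def hermiteM : ℕ → Polynomial ℝ
  | 0 => 1
  | 1 => X
  | (n + 2) => X * hermiteM (n + 1) - C (((n : ℝ) + 1) / 2) * hermiteM n

/-- The monic Hermite polynomials extended to integer indices by the convention
`H_k = 0` for `k < 0`. -/
noncomputable def hermiteZ : ℤ → Polynomial ℝ :=
  fun k => if 0 ≤ k then hermiteM k.toNat else 0

noncomputable def hermitePowCoeff : ℕ → ℕ → ℝ[X]
  | 0, 0 => 1
  | 0, _ + 1 => 0
  | j + 1, 0 => hermitePowCoeff j 0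
  | j + 1, ν + 1 =>
      hermitePowCoeff j (ν + 1) + C (1 / 2) * (X + C ((j : ℝ) - 2 * ν)) * hermitePowCoeff j ν

namespace hermitePowCoeff

@[simp]
lemma zero_right (j : ℕ) : hermitePowCoeff j 0 = 1 := by
  induction j <;> simp [hermitePowCoeff, *]

lemma succ_succ (j ν : ℕ) :
    hermitePowCoeff (j + 1) (ν + 1) =
      hermitePowCoeff j (ν + 1) + C (1 / 2) * (X + C ((j : ℝ) - 2 * ν)) * hermitePowCoeff j ν :=
  rfl

lemma eq_zero_of_lt {j ν : ℕ} (h : j < ν) : hermitePowCoeff j ν = 0 := by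
  induction j generalizing ν with
  | zero => obtain ⟨ν, rfl⟩ := Nat.exists_eq_add_one.2 h; rfl
  | succ j ih =>
    obtain ⟨ν, rfl⟩ := Nat.exists_eq_add_one.2 (Nat.zero_lt_of_lt h)
    rw [succ_succ, ih (by omega), ih (by omega), mul_zero, add_zero]

lemma eval_succ_succ (j ν : ℕ) (x : ℝ) :
    (hermitePowCoeff (j + 1) (ν + 1)).eval x =
      (hermitePowCoeff j (ν + 1)).eval x + (hermitePowCoeff j ν).eval x * ((x + j - 2 * ν) / 2) := by
  rw [succ_succ]
  simp only [eval_add, eval_mul, eval_C, eval_X]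
  ring

lemma natDegree_le (j ν : ℕ) : (hermitePowCoeff j ν).natDegree ≤ ν := by
  induction j generalizing ν with
  | zero => cases ν <;> simp [hermitePowCoeff]
  | succ j ih =>
    cases ν with
    | zero => simp
    | succ ν =>
      rw [succ_succ]
      refine natDegree_add_le_of_degree_le (ih _) ?_
      rw [mul_assoc, add_comm ν]
      exact (natDegree_C_mul_le _ _).trans
        (natDegree_mul_le_of_le (natDegree_X_add_C _).le (ih ν))

lemma coeff_self (j ν : ℕ) : (hermitePowCoeff j ν).coeff ν = (j.choose ν : ℝ) / 2 ^ ν := by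
  induction j generalizing ν with
  | zero => cases ν <;> simp [hermitePowCoeff]
  | succ j ih =>
    cases ν with
    | zero => simp
    | succ ν =>
      have h_top : (hermitePowCoeff j ν).coeff (ν + 1) = 0 :=
        coeff_eq_zero_of_natDegree_lt (Nat.lt_succ_of_le (natDegree_le j ν))
      rw [succ_succ, coeff_add, mul_assoc, coeff_C_mul, add_mul, coeff_add, coeff_X_mul,
        coeff_C_mul, ih, ih, h_top, Nat.choose_succ_succ]
      push_cast
      ring

lemma natDegree {j ν : ℕ} (h : ν ≤ j) : (hermitePowCoeff j ν).natDegree = ν :=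
  natDegree_eq_of_le_of_coeff_ne_zero (natDegree_le j ν) <| by
    rw [coeff_self]
    have := Nat.choose_pos h
    positivity

lemma leadingCoeff {j ν : ℕ} (h : ν ≤ j) :
    (hermitePowCoeff j ν).leadingCoeff = (j.choose ν : ℝ) / 2 ^ ν := by
  rw [Polynomial.leadingCoeff, natDegree h, coeff_self]

lemma eval_eq_zero {j ν n : ℕ} (h : (n : ℤ) + j < 2 * ν) :
    (hermitePowCoeff j ν).eval (n : ℝ) = 0 := by
  induction j generalizing ν with
  | zero => obtain ⟨ν, rfl⟩ := Nat.exists_eq_add_one.2 (by omega : 0 < ν); simp [hermitePowCoeff]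
  | succ j ih =>
    obtain ⟨ν, rfl⟩ := Nat.exists_eq_add_one.2 (by omega : 0 < ν)
    rw [eval_succ_succ, ih (by omega)]
    rcases (show (n : ℤ) + j ≤ 2 * ν by omega).eq_or_lt with h_eq | h_lt
    · have : (n : ℝ) + j - 2 * ν = 0 := by exact_mod_cast sub_eq_zero.2 h_eq
      rw [this]
      ring
    · rw [ih h_lt]
      ring

end hermitePowCoeff

lemma hermiteZ_natCast (n : ℕ) : hermiteZ n = hermiteM n := by
  simp [hermiteZ]

lemma hermiteZ_of_neg {k : ℤ} (hk : k < 0) : hermiteZ k = 0 := by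
  simp [hermiteZ, hk.not_ge]

lemma X_mul_hermiteZ {k : ℤ} (hk : k ≠ -1) :
    X * hermiteZ k = hermiteZ (k + 1) + C ((k : ℝ) / 2) * hermiteZ (k - 1) := by
  rcases lt_trichotomy k 0 with h_neg | rfl | h_pos
  · rw [hermiteZ_of_neg (by omega), hermiteZ_of_neg (by omega), hermiteZ_of_neg (by omega)]
    ring
  · norm_num [hermiteZ, hermiteM]
  · obtain ⟨m, rfl⟩ : ∃ m : ℕ, k = m + 1 := ⟨(k - 1).toNat, by omega⟩
    rw [show (m : ℤ) + 1 + 1 = ((m + 2 : ℕ) : ℤ) by push_cast; ring, add_sub_cancel_right,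
      show (m : ℤ) + 1 = ((m + 1 : ℕ) : ℤ) by push_cast; ring, hermiteZ_natCast, hermiteZ_natCast,
      hermiteZ_natCast, hermiteM]
    push_cast
    ring

lemma X_mul_C_eval_hermitePowCoeff_mul_hermiteZ (j ν n : ℕ) :
    X * (C ((hermitePowCoeff j ν).eval (n : ℝ)) * hermiteZ (n + j - 2 * ν)) =
      C ((hermitePowCoeff j ν).eval (n : ℝ)) * hermiteZ (n + (j + 1 : ℕ) - 2 * ν) +
        C ((hermitePowCoeff j ν).eval (n : ℝ) * ((n + j - 2 * ν) / 2)) *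
          hermiteZ (n + (j + 1 : ℕ) - 2 * (ν + 1 : ℕ)) := by
  by_cases hk : (n : ℤ) + j - 2 * ν = -1
  · rw [hermitePowCoeff.eval_eq_zero (by omega)]
    simp
  · have h_up : (n : ℤ) + (j + 1 : ℕ) - 2 * ν = n + j - 2 * ν + 1 := by push_cast; ring
    have h_down : (n : ℤ) + (j + 1 : ℕ) - 2 * (ν + 1 : ℕ) = n + j - 2 * ν - 1 := by push_cast; ring
    rw [mul_left_comm, X_mul_hermiteZ hk, h_up, h_down, C_mul, mul_add, mul_assoc]
    push_cast
    ring

lemma X_pow_mul_hermiteM (j n : ℕ) :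
    X ^ j * hermiteM n = ∑ ν ∈ range (j + 1),
      C ((hermitePowCoeff j ν).eval (n : ℝ)) * hermiteZ (n + j - 2 * ν) := by
  induction j with
  | zero => simp [hermiteZ_natCast]
  | succ j ih =>
    rw [pow_succ', mul_assoc, ih, mul_sum]
    simp only [X_mul_C_eval_hermitePowCoeff_mul_hermiteZ, sum_add_distrib]
    have h_top : C ((hermitePowCoeff j (j + 1)).eval (n : ℝ)) *
        hermiteZ (n + (j + 1 : ℕ) - 2 * (j + 1 : ℕ)) = 0 := by
      rw [hermitePowCoeff.eq_zero_of_lt j.lt_succ_self, eval_zero, C_0, zero_mul]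
    rw [← add_zero (∑ ν ∈ range (j + 1), _), ← h_top, ← sum_range_succ,
      sum_range_succ' _ (j + 1), sum_range_succ' _ (j + 1)]
    simp only [hermitePowCoeff.eval_succ_succ, hermitePowCoeff.zero_right, C_add, add_mul,
      sum_add_distrib]
    abel

/-- `z^j H_n(z) = Σ_{ν=0}^{j} σ_{j,ν}(n) H_{n+j−2ν}(z)` for every
`j, n ≥ 0`, where each `σ_{j,ν}` is a polynomial in `n` of degree `ν` with leading
coefficient `2^{−ν}·C(j,ν)` (with the convention `H_k = 0` for `k < 0`). -/
theorem hermite_power_expansion :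
    ∃ σ : ℕ → ℕ → Polynomial ℝ,
      (∀ j ν, ν ≤ j →
        (σ j ν).natDegree = ν ∧ (σ j ν).leadingCoeff = (j.choose ν : ℝ) / 2 ^ ν) ∧
      ∀ j n : ℕ,
        X ^ j * hermiteM n
          = ∑ ν ∈ Finset.range (j + 1),
              C ((σ j ν).eval (n : ℝ)) * hermiteZ ((n : ℤ) + (j : ℤ) - 2 * (ν : ℤ)) :=
  ⟨hermitePowCoeff,
    fun _ _ h => ⟨hermitePowCoeff.natDegree h, hermitePowCoeff.leadingCoeff h⟩,
    X_pow_mul_hermiteM⟩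
end
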